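/- Let Z = {P_1,...,P_m} ⊂ P^n be distinct points with dual linear forms L_1,...,L_m ∈ S = K[y_0,...,y_n], K of characteristic zero. Then for every j ≥ 0, the Hilbert function satisfies HF(R/I_Z, j) = dim_K Span_K{L_1^j, ..., L_m^j}. -/

import Mathlib

open MvPolynomial

/-- The differential operator on `K[y]` corresponding to the monomial `x^d`. -/
noncomputable def diffMonomial {n : ℕ} (K : Type) [CommRing K] (d : Fin n →₀ ℕ) :
    Module.End K (MvPolynomial (Fin n) K) :=
  ((List.finRange n).map fun i => (((pderiv i : Derivation K (MvPolynomial (Fin n) K) (MvPolynomial (Fin n) K)).toLinearMap) ^ d i)).prod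

/-- The apolarity action `f ∘ G` of `R = K[x]` on `S = K[y]` by partial differentiation. -/
noncomputable def apolar {n : ℕ} {K : Type} [CommRing K]
    (f G : MvPolynomial (Fin n) K) : MvPolynomial (Fin n) K :=
  f.support.sum fun d => f.coeff d • diffMonomial K d G

/-- The dual linear form `L = a_0 y_0 + ⋯ + a_n y_n` of a point with coordinates `a`. -/
noncomputable def dualForm {n : ℕ} {K : Type} [CommRing K] (a : Fin n → K) :
    MvPolynomial (Fin n) K :=
  ∑ j, C (a j) * X j

/-- Hilbert function of `R/I` in degree `j`. -/
noncomputable def HF {n : ℕ} {K : Type} [Field K]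
    (I : Ideal (MvPolynomial (Fin n) K)) (j : ℕ) : ℕ :=
  Module.finrank K ((homogeneousSubmodule (Fin n) K j).map (Ideal.Quotient.mkₐ K I).toLinearMap)

/-- The socle of `R/I`. -/
noncomputable def socle {n : ℕ} {K : Type} [Field K]
    (I : Ideal (MvPolynomial (Fin n) K)) : Submodule K (MvPolynomial (Fin n) K ⧸ I) :=
  ⨅ i : Fin n, LinearMap.ker (LinearMap.mulLeft K (Ideal.Quotient.mk I (X i)))

/-- `R/I` is Artinian Gorenstein. -/
def ArtinianGorenstein {n : ℕ} {K : Type} [Field K]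
    (I : Ideal (MvPolynomial (Fin n) K)) : Prop :=
  FiniteDimensional K (MvPolynomial (Fin n) K ⧸ I) ∧ Module.finrank K (socle I) = 1

/-!
In degree `j` a form lies in `I_Z` exactly when it vanishes at the chosen coordinate vectors
`a i` (homogeneity takes care of their scalar multiples), so `HF(R/I_Z, j)` is the rank of the
evaluation map `ev : R_j → K^m`. The coefficient of `y^d` in `L_i^j` is the multinomial
coefficient of `d` times `a_i^d`, and it is nonzero in characteristic zero; hence
`∑ c_i L_i^j = 0` iff `c` is orthogonal to the image of `ev`. So `c ↦ ∑ c_i L_i^j` has the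
same kernel as the transpose of `ev`, and both ranks agree.
-/

open Module

namespace LinearMap

theorem finrank_range_eq_of_ker_eq {R M N P : Type*} [Ring R] [AddCommGroup M] [Module R M]
    [AddCommGroup N] [Module R N] [AddCommGroup P] [Module R P]
    {f : M →ₗ[R] N} {g : M →ₗ[R] P} (h : ker f = ker g) :
    finrank R (range f) = finrank R (range g) :=
  (f.quotKerEquivRange.symm.trans ((Submodule.quotEquivOfEq _ _ h).trans
    g.quotKerEquivRange)).finrank_eq

theorem finrank_range_eq_of_ker_eq_dotProduct {K V W ι : Type*} [Field K] [AddCommGroup V]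
    [Module K V] [AddCommGroup W] [Module K W] [Fintype ι] (φ : V →ₗ[K] ι → K)
    (ψ : (ι → K) →ₗ[K] W) (h : ∀ c, ψ c = 0 ↔ ∀ v, c ⬝ᵥ φ v = 0) :
    finrank K (range ψ) = finrank K (range φ) := by
  classical
  have hker : ker ψ = ker (φ.dualMap ∘ₗ (dotProductEquiv K ι).toLinearMap) := by
    ext c
    simp [h, LinearMap.ext_iff]
  rw [finrank_range_eq_of_ker_eq hker, range_comp_of_range_eq_top _ (LinearEquiv.range _),
    finrank_range_dualMap_eq_finrank_range]

end LinearMap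

namespace MvPolynomial

section CommSemiring

variable {σ R : Type*} [CommSemiring R]

theorem IsHomogeneous.eval_smul {f : MvPolynomial σ R} {j : ℕ} (hf : f.IsHomogeneous j)
    (t : R) (x : σ → R) : eval (t • x) f = t ^ j * eval x f := by
  rw [eval_eq, eval_eq, Finset.mul_sum]
  refine Finset.sum_congr rfl fun d hd => ?_
  simp only [Pi.smul_apply, smul_eq_mul, mul_pow, Finset.prod_mul_distrib,
    Finset.prod_pow_eq_pow_sum]
  rw [← hf.degree_eq_sum_deg_support hd]
  ring

theorem IsHomogeneous.forall_eval_smul_eq_zero_iff {f : MvPolynomial σ R} {j : ℕ}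
    (hf : f.IsHomogeneous j) (x : σ → R) : (∀ t : R, eval (t • x) f = 0) ↔ eval x f = 0 :=
  ⟨fun h => by simpa using h 1, fun h t => by rw [hf.eval_smul, h, mul_zero]⟩

theorem homogeneousSubmodule_eq_span_monomial (j : ℕ) :
    homogeneousSubmodule σ R j = .span R ((fun d => monomial d 1) '' {d | d.degree = j}) := by
  simp [homogeneousSubmodule_eq_finsupp_supported, AddMonoidAlgebra.supported_eq_span_single,
    single_eq_monomial]

theorem homogeneousSubmodule_le_ker_iff {M : Type*} [AddCommMonoid M] [Module R M]
    (ℓ : MvPolynomial σ R →ₗ[R] M) (j : ℕ) :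
    homogeneousSubmodule σ R j ≤ LinearMap.ker ℓ ↔
      ∀ d : σ →₀ ℕ, d.degree = j → ℓ (monomial d 1) = 0 := by
  simp [homogeneousSubmodule_eq_span_monomial, Submodule.span_le, Set.subset_def]

noncomputable def evalPoints {ι : Type*} (a : ι → σ → R) :
    MvPolynomial σ R →ₗ[R] ι → R :=
  LinearMap.pi fun i => (aeval (a i)).toLinearMap

@[simp]
theorem evalPoints_apply {ι : Type*} (a : ι → σ → R) (f : MvPolynomial σ R) (i : ι) :
    evalPoints a f i = eval (a i) f := by
  simp [evalPoints]

end CommSemiring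

section DualForm

variable {N : ℕ} {K : Type} [Field K] {ι : Type*} [Fintype ι]

theorem coeff_dualForm_pow (a : Fin N → K) (j : ℕ) (d : Fin N →₀ ℕ) :
    coeff d (dualForm a ^ j) =
      if d.degree = j then d.multinomial * eval a (monomial d 1) else 0 := by
  rw [dualForm, eval_monomial, one_mul]
  simp_rw [← smul_eq_C_mul]
  exact coeff_linearCombination_X_pow_of_fintype a d j

theorem sum_smul_dualForm_pow_eq_zero_iff_forall_monomial [CharZero K] (a : ι → Fin N → K)
    (c : ι → K) (j : ℕ) :
    ∑ i, c i • dualForm (a i) ^ j = 0 ↔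
      ∀ d : Fin N →₀ ℕ, d.degree = j → ∑ i, c i * eval (a i) (monomial d 1) = 0 := by
  simp only [MvPolynomial.ext_iff, coeff_sum, coeff_smul, coeff_dualForm_pow, coeff_zero,
    smul_eq_mul, mul_ite, mul_zero, Finset.sum_ite_irrel]
  refine forall_congr' fun d => ?_
  by_cases hd : d.degree = j
  · have hmult : (d.multinomial : K) ≠ 0 := Nat.cast_ne_zero.2 (Nat.multinomial_pos _ _).ne'
    simp_rw [if_pos hd, mul_left_comm _ (d.multinomial : K), ← Finset.mul_sum, mul_eq_zero,
      hmult, false_or, hd, forall_true_left]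
  · simp [hd]

theorem sum_smul_dualForm_pow_eq_zero_iff [CharZero K] (a : ι → Fin N → K) (c : ι → K)
    (j : ℕ) :
    ∑ i, c i • dualForm (a i) ^ j = 0 ↔
      ∀ f ∈ homogeneousSubmodule (Fin N) K j, c ⬝ᵥ evalPoints a f = 0 := by
  classical
  simpa [sum_smul_dualForm_pow_eq_zero_iff_forall_monomial, dotProduct, SetLike.le_def]
    using (homogeneousSubmodule_le_ker_iff (dotProductEquiv K ι c ∘ₗ evalPoints a) j).symm

end DualForm

end MvPolynomial

open MvPolynomial LinearMap

theorem emsalem_iarrobino_general (K : Type) [Field K] [CharZero K] (n m : ℕ)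
    (a : Fin m → Fin (n + 1) → K)
    (I : Ideal (MvPolynomial (Fin (n + 1)) K))
    (hI : ∀ f, f ∈ I ↔ ∀ i, ∀ t : K, eval (t • a i) f = 0)
    (j : ℕ) :
    HF I j = Module.finrank K
      (Submodule.span K (Set.range fun i => dualForm (a i) ^ j)) := by
  set V := homogeneousSubmodule (Fin (n + 1)) K j
  have hker : ker ((Ideal.Quotient.mkₐ K I).toLinearMap ∘ₗ V.subtype) =
      ker (evalPoints a ∘ₗ V.subtype) := by
    ext ⟨f, hf⟩
    simp [Ideal.Quotient.eq_zero_iff_mem, hI, funext_iff, hf.forall_eval_smul_eq_zero_iff]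
  have hdual : ∀ c, Fintype.linearCombination K (fun i => dualForm (a i) ^ j) c = 0 ↔
      ∀ f : V, c ⬝ᵥ (evalPoints a ∘ₗ V.subtype) f = 0 := fun c => by
    rw [Fintype.linearCombination_apply, sum_smul_dualForm_pow_eq_zero_iff, Subtype.forall]
    rfl
  rw [HF, ← Fintype.range_linearCombination, finrank_range_eq_of_ker_eq_dotProduct _ _ hdual,
    ← finrank_range_eq_of_ker_eq hker, range_comp, Submodule.range_subtype]

/-- Emsalem–Iarrobino: for distinct points with dual forms `L_i`,
`HF(R/I_Z, j) = dim Span{L_1^j, …, L_m^j}`. -/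
theorem emsalem_iarrobino (K : Type) [Field K] [CharZero K] (n m : ℕ)
    (a : Fin m → Fin (n + 1) → K) (ha : ∀ i, a i ≠ 0)
    (hdist : ∀ i j, i ≠ j → ∀ t : K, a i ≠ t • a j)
    (I : Ideal (MvPolynomial (Fin (n + 1)) K))
    (hI : ∀ f, f ∈ I ↔ ∀ i, ∀ t : K, eval (t • a i) f = 0)
    (j : ℕ) :
    HF I j = Module.finrank K
      (Submodule.span K (Set.range fun i => dualForm (a i) ^ j)) :=
  emsalem_iarrobino_general K n m a I hI j
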